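/- Let a, b, c, d, e ∈ K with ad = bc, and define π on K[x,y] by π f = Q_0·∂f + R_0·f where Q_0 = axy + (c+e)x + (b-e)y + d and R_0 = b - c - e. Then π satisfies the Hecke relation π² = (b - c)·π + e(e + c - b)·Id. -/

import Mathlib

open MvPolynomial

/-- The automorphism of `K[x,y]` swapping the two variables. -/
noncomputable def s2 {K : Type*} [Field K] :
    MvPolynomial (Fin 2) K →ₐ[K] MvPolynomial (Fin 2) K :=
  rename (Equiv.swap 0 1)

/-!
Write `∂` for the divided difference and `Q = axy + px + qy + d`. Divided differences are
symmetric, and `Q - sQ = (p - q)(x - y)`, so `∂(Q·∂f + r·f) = (p - q + r)·∂f`. For `π` this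
factor is `e`, whence `π² f = Q·e·∂f + R_0·π f = e(π f - R_0 f) + R_0·π f`, which is the Hecke
relation since `e + R_0 = b - c`.
-/

theorem X_zero_sub_X_one_ne_zero {R : Type*} [CommRing R] [Nontrivial R] :
    (X 0 - X 1 : MvPolynomial (Fin 2) R) ≠ 0 :=
  sub_ne_zero.mpr fun h => by simpa using X_injective h

section Swap

variable {K : Type*} [Field K]

@[simp]
theorem s2_X_zero : s2 (X 0 : MvPolynomial (Fin 2) K) = X 1 := by
  simp [s2]

@[simp]
theorem s2_X_one : s2 (X 1 : MvPolynomial (Fin 2) K) = X 0 := by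
  simp [s2]

@[simp]
theorem s2_C (u : K) : s2 (C u : MvPolynomial (Fin 2) K) = C u :=
  s2.commutes u

@[simp]
theorem s2_s2 (g : MvPolynomial (Fin 2) K) : s2 (s2 g) = g := by
  rw [s2, rename_rename, ← Equiv.Perm.coe_mul, Equiv.swap_mul_self, Equiv.Perm.coe_one, rename_id,
    AlgHom.id_apply]

theorem s2_eq_self_of_mul_eq_sub_s2 {f D : MvPolynomial (Fin 2) K}
    (hD : (X 0 - X 1) * D = f - s2 f) : s2 D = D := by
  have hsD : (X 1 - X 0) * s2 D = s2 f - f := by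
    simpa using congrArg s2 hD
  refine mul_left_cancel₀ X_zero_sub_X_one_ne_zero ?_
  linear_combination -hD - hsD

theorem sub_s2_mul_add_C_mul {f D : MvPolynomial (Fin 2) K} (a p q d r : K)
    (hD : (X 0 - X 1) * D = f - s2 f) :
    (C a * X 0 * X 1 + C p * X 0 + C q * X 1 + C d) * D + C r * f
        - s2 ((C a * X 0 * X 1 + C p * X 0 + C q * X 1 + C d) * D + C r * f)
      = (X 0 - X 1) * (C (p - q + r) * D) := by
  simp only [map_add, map_mul, s2_C, s2_X_zero, s2_X_one, s2_eq_self_of_mul_eq_sub_s2 hD,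
    C_sub]
  linear_combination -C r * hD

end Swap

theorem hecke_relation_general {K : Type*} [Field K]
    (a b c d e : K)
    (f Df Dg : MvPolynomial (Fin 2) K)
    (hDf : (X 0 - X 1) * Df = f - s2 f)
    (hDg : (X 0 - X 1) * Dg
      = ((C a * X 0 * X 1 + C (c + e) * X 0 + C (b - e) * X 1 + C d) * Df
          + C (b - c - e) * f)
        - s2 ((C a * X 0 * X 1 + C (c + e) * X 0 + C (b - e) * X 1 + C d) * Df
          + C (b - c - e) * f)) :
    (C a * X 0 * X 1 + C (c + e) * X 0 + C (b - e) * X 1 + C d) * Dg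
        + C (b - c - e)
          * ((C a * X 0 * X 1 + C (c + e) * X 0 + C (b - e) * X 1 + C d) * Df
            + C (b - c - e) * f)
      = C (b - c)
          * ((C a * X 0 * X 1 + C (c + e) * X 0 + C (b - e) * X 1 + C d) * Df
            + C (b - c - e) * f)
        + C (e * (e + c - b)) * f := by
  have hDg_eq : Dg = C e * Df := by
    refine mul_left_cancel₀ X_zero_sub_X_one_ne_zero ?_
    rw [hDg, sub_s2_mul_add_C_mul a (c + e) (b - e) d (b - c - e) hDf]
    rw [show c + e - (b - e) + (b - c - e) = e by ring]
  rw [hDg_eq]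
  simp only [C_add, C_sub, C_mul]
  ring

/-- With `ad = bc`, the operator `π f = Q_0·∂f + R_0·f`, where
`Q_0 = axy + (c+e)x + (b-e)y + d` and `R_0 = b - c - e`, satisfies the Hecke
relation `π² = (b - c)·π + e(e + c - b)·Id`. -/
theorem hecke_relation {K : Type*} [Field K]
    (a b c d e : K) (habcd : a * d = b * c)
    (f Df Dg : MvPolynomial (Fin 2) K)
    (hDf : (X 0 - X 1) * Df = f - s2 f)
    (hDg : (X 0 - X 1) * Dg
      = ((C a * X 0 * X 1 + C (c + e) * X 0 + C (b - e) * X 1 + C d) * Df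
          + C (b - c - e) * f)
        - s2 ((C a * X 0 * X 1 + C (c + e) * X 0 + C (b - e) * X 1 + C d) * Df
          + C (b - c - e) * f)) :
    (C a * X 0 * X 1 + C (c + e) * X 0 + C (b - e) * X 1 + C d) * Dg
        + C (b - c - e)
          * ((C a * X 0 * X 1 + C (c + e) * X 0 + C (b - e) * X 1 + C d) * Df
            + C (b - c - e) * f)
      = C (b - c)
          * ((C a * X 0 * X 1 + C (c + e) * X 0 + C (b - e) * X 1 + C d) * Df
            + C (b - c - e) * f)
        + C (e * (e + c - b)) * f :=
  hecke_relation_general a b c d e f Df Dg hDf hDg
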